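/- arXiv:2105.03936 — 4 statements merged into one kernel-verified Lean document; each statement's English description precedes it below -/
import Mathlib

section
/- For each nonincreasing function φ : [1,n] → [1,k], the set S_φ = {v_j : j ∉ im(φ)} ⊔ {x_{i+1} : φ(i) = φ(i+1)} ⊔ {−c_{i,φ(i)} : φ(i−1) > φ(i) or i = 1} ⊔ {c_{i,φ(i)−1} : φ(i+1) < φ(i) or i = n} is a basis of the lattice H. -/
/-!
The homology lattice `H` of the `(n+k+1)`-punctured sphere:
`H = (ℤx₁ ⊕ ⋯ ⊕ ℤx_{n+1} ⊕ ℤv₁ ⊕ ⋯ ⊕ ℤv_k)/(x₁+⋯+x_{n+1} − v₁−⋯−v_k)`,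
with the classes `c_{i,j} = v_k + ⋯ + v_{j+1} − x₁ − ⋯ − x_i`.
All indices are 1-based, as in the paper.
-/

open Finset

/-- The free abelian group on `x₁,…,x_{n+1},v₁,…,v_k`. -/
abbrev FreeH (n k : ℕ) := (Fin (n + 1) ⊕ Fin k) →₀ ℤ

/-- The generator `xᵢ` (for `1 ≤ i ≤ n+1`) of the free abelian group. -/
noncomputable def XX (n k : ℕ) (i : ℕ) : FreeH n k :=
  if h : 1 ≤ i ∧ i ≤ n + 1 then Finsupp.single (Sum.inl (⟨i - 1, by omega⟩ : Fin (n + 1))) 1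
  else 0

/-- The generator `vⱼ` (for `1 ≤ j ≤ k`) of the free abelian group. -/
noncomputable def VV (n k : ℕ) (j : ℕ) : FreeH n k :=
  if h : 1 ≤ j ∧ j ≤ k then Finsupp.single (Sum.inr (⟨j - 1, by omega⟩ : Fin k)) 1
  else 0

/-- The relation `x₁+⋯+x_{n+1} − (v₁+⋯+v_k)`. -/
noncomputable def relH (n k : ℕ) : FreeH n k :=
  (∑ i ∈ Finset.Icc 1 (n + 1), XX n k i) - (∑ j ∈ Finset.Icc 1 k, VV n k j)

/-- The lattice `H`. -/
abbrev HLat (n k : ℕ) := FreeH n k ⧸ Submodule.span ℤ {relH n k}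

/-- The class `xᵢ ∈ H`. -/
noncomputable def xH (n k i : ℕ) : HLat n k := Submodule.Quotient.mk (XX n k i)

/-- The class `vⱼ ∈ H`. -/
noncomputable def vH (n k j : ℕ) : HLat n k := Submodule.Quotient.mk (VV n k j)

/-- The class `c_{i,j} = v_k + ⋯ + v_{j+1} − x₁ − ⋯ − x_i ∈ H`. -/
noncomputable def cH (n k i j : ℕ) : HLat n k :=
  (∑ j' ∈ Finset.Icc (j + 1) k, vH n k j') - (∑ i' ∈ Finset.Icc 1 i, xH n k i')

/-- The set `S_φ ⊆ H` attached to a nonincreasing function `φ : [1,n] → [1,k]`: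
`S_φ = {v_j : j ∉ im φ} ⊔ {x_{i+1} : φ(i) = φ(i+1)} ⊔
       {−c_{i,φ(i)} : φ(i−1) > φ(i) or i = 1} ⊔ {c_{i,φ(i)−1} : φ(i+1) < φ(i) or i = n}`. -/
def Sphi (n k : ℕ) (φ : ℕ → ℕ) : Set (HLat n k) :=
  {h | (∃ j, 1 ≤ j ∧ j ≤ k ∧ (∀ i, 1 ≤ i → i ≤ n → φ i ≠ j) ∧ h = vH n k j) ∨
       (∃ i, 1 ≤ i ∧ i + 1 ≤ n ∧ φ i = φ (i + 1) ∧ h = xH n k (i + 1)) ∨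
       (∃ i, 1 ≤ i ∧ i ≤ n ∧ (i = 1 ∨ φ i < φ (i - 1)) ∧ h = - cH n k i (φ i)) ∨
       (∃ i, 1 ≤ i ∧ i ≤ n ∧ (i = n ∨ φ (i + 1) < φ i) ∧ h = cH n k i (φ i - 1))}

/-!
Each position `i ∈ [1,n]` contributes one element of `S_φ` (`x_i` or `-c_{i,φ(i)}`) and each value
`j ∈ [1,k]` one more (`v_j`, or `c_{i,j-1}` for the last preimage `i` of `j`), so `S_φ` is the image
of a family indexed by `n + k` elements. It spans `H`: going up in `i` with
`c_{i+1,j} = c_{i,j} - x_{i+1}` every `c_{i,φ(i)}` is reached, going down every `c_{i,φ(i)-1}`, their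
differences give the `v_j`, and then `x_i = c_{i-1,0} - c_{i,0}` and `x_{n+1} = c_{n,0}`.
Eliminating `x_{n+1}` shows that `H` is free of rank `n + k`, so a spanning family of `n + k`
elements is a basis, a surjective endomorphism of `ℤ^{n+k}` being injective.
-/

open Finset

theorem linearIndependent_of_span_eq_top_of_surjective {R M ι : Type*} [Semiring R]
    [OrzechProperty R] [Finite ι] [AddCommMonoid M] [Module R M] {v : ι → M}
    (hv : Submodule.span R (Set.range v) = ⊤) {f : M →ₗ[R] ι →₀ R}
    (hf : Function.Surjective f) : LinearIndependent R v := by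
  have hsurj : Function.Surjective (Finsupp.linearCombination R v) := by
    rw [← LinearMap.range_eq_top, Finsupp.range_linearCombination, hv]
  have hinj := OrzechProperty.injective_of_surjective_endomorphism
    (f ∘ₗ Finsupp.linearCombination R v) (hf.comp hsurj)
  rw [LinearMap.coe_comp] at hinj
  exact hinj.of_comp

lemma sum_Icc_one_eq_sum_fin {M : Type*} [AddCommMonoid M] (m : ℕ) (f : ℕ → M) :
    ∑ i ∈ Icc 1 m, f i = ∑ i : Fin m, f (i + 1) := by
  rw [Fin.sum_univ_eq_sum_range (fun i => f (i + 1)), range_eq_Ico, sum_Ico_add', zero_add,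
    Ico_add_one_right_eq_Icc]

section Presentation

variable {n k : ℕ}

lemma XX_succ (i : Fin (n + 1)) : XX n k (i + 1) = Finsupp.single (.inl i) 1 := by
  rw [XX, dif_pos ⟨by omega, by omega⟩]
  simp

lemma VV_succ (j : Fin k) : VV n k (j + 1) = Finsupp.single (.inr j) 1 := by
  rw [VV, dif_pos ⟨by omega, by omega⟩]
  simp

lemma relH_eq : relH n k =
    ∑ i, Finsupp.single (.inl i) 1 - ∑ j, Finsupp.single (.inr j) 1 := by
  simp only [relH, sum_Icc_one_eq_sum_fin, XX_succ, VV_succ]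

lemma sum_xH_eq_sum_vH : ∑ i ∈ Icc 1 (n + 1), xH n k i = ∑ j ∈ Icc 1 k, vH n k j := by
  have hrel : (Submodule.span ℤ {relH n k}).mkQ (relH n k) = 0 := by
    simp [Submodule.mem_span_singleton_self]
  rw [relH, map_sub, map_sum, map_sum, sub_eq_zero] at hrel
  exact hrel

lemma eq_top_of_xH_mem_of_vH_mem {p : Submodule ℤ (HLat n k)}
    (hx : ∀ i, 1 ≤ i → i ≤ n + 1 → xH n k i ∈ p) (hv : ∀ j, 1 ≤ j → j ≤ k → vH n k j ∈ p) :
    p = ⊤ := by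
  have hgen : Submodule.span ℤ (Set.range (Finsupp.basisSingleOne : Module.Basis _ ℤ (FreeH n k)))
      ≤ p.comap (Submodule.mkQ _) := by
    rw [Submodule.span_le]
    rintro _ ⟨i | j, rfl⟩
    · simpa [xH, XX_succ] using hx (i + 1) (by omega) (by omega)
    · simpa [vH, VV_succ] using hv (j + 1) (by omega) (by omega)
  rw [Module.Basis.span_eq] at hgen
  refine eq_top_iff.mpr fun z _ => ?_
  obtain ⟨w, rfl⟩ := Submodule.mkQ_surjective _ z
  exact hgen Submodule.mem_top

/-- Coordinates in the basis `x₁,…,xₙ,v₁,…,v_k`, with `x_{n+1}` eliminated by the relation. -/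
noncomputable def coordFree (n k : ℕ) : FreeH n k →ₗ[ℤ] (Fin n ⊕ Fin k →₀ ℤ) :=
  Finsupp.linearCombination ℤ <| Sum.elim
    (Fin.lastCases (∑ j, Finsupp.single (.inr j) 1 - ∑ i, Finsupp.single (.inl i) 1)
      fun i => Finsupp.single (.inl i) 1)
    fun j => Finsupp.single (.inr j) 1

lemma coordFree_relH : coordFree n k (relH n k) = 0 := by
  simp [relH_eq, coordFree, Fin.sum_univ_castSucc]

noncomputable def coordH (n k : ℕ) : HLat n k →ₗ[ℤ] (Fin n ⊕ Fin k →₀ ℤ) :=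
  Submodule.liftQ _ (coordFree n k) <|
    (Submodule.span_singleton_le_iff_mem _ _).mpr coordFree_relH

lemma coordH_surjective : Function.Surjective (coordH n k) := by
  rw [← LinearMap.range_eq_top, coordH, Submodule.range_liftQ, coordFree,
    Finsupp.range_linearCombination, eq_top_iff, ← Finsupp.basisSingleOne.span_eq]
  refine Submodule.span_mono ?_
  rintro _ ⟨i | j, rfl⟩
  · exact ⟨.inl i.castSucc, by simp⟩
  · exact ⟨.inr j, by simp⟩

end Presentation

section ClassIdentities

variable {n k : ℕ}

lemma cH_succ_left (i j : ℕ) : cH n k (i + 1) j = cH n k i j - xH n k (i + 1) := by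
  rw [cH, cH, sum_Icc_succ_top (by omega)]
  abel

lemma cH_eq_cH_add_sum (i : ℕ) {j j' : ℕ} (hj : j ≤ j') (hj' : j' ≤ k) :
    cH n k i j = cH n k i j' + ∑ l ∈ Ioc j j', vH n k l := by
  simp only [cH, Icc_add_one_left_eq_Ioc, ← sum_Ioc_consecutive _ hj hj']
  abel

lemma cH_sub_one (i : ℕ) {j : ℕ} (hj : 1 ≤ j) (hjk : j ≤ k) :
    cH n k i (j - 1) = cH n k i j + vH n k j := by
  obtain ⟨j, rfl⟩ : ∃ j', j = j' + 1 := ⟨j - 1, by omega⟩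
  rw [Nat.add_sub_cancel, cH_eq_cH_add_sum i (Nat.le_succ j) hjk, Nat.Ioc_succ_singleton,
    sum_singleton]

lemma cH_self_zero : cH n k n 0 = xH n k (n + 1) := by
  rw [cH, ← sum_xH_eq_sum_vH, sum_Icc_succ_top (by omega)]
  abel

end ClassIdentities

section Spanning

variable {n k : ℕ} {φ : ℕ → ℕ} (hmono : ∀ i, 1 ≤ i → i + 1 ≤ n → φ (i + 1) ≤ φ i)
include hmono

lemma cH_mem_span_Sphi {i : ℕ} (hi : 1 ≤ i) (hin : i ≤ n) :
    cH n k i (φ i) ∈ Submodule.span ℤ (Sphi n k φ) := by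
  induction i, hi using Nat.le_induction with
  | base =>
    exact neg_mem_iff.mp <| Submodule.subset_span <| .inr <| .inr <| .inl
      ⟨1, le_rfl, hin, .inl rfl, rfl⟩
  | succ i hi ih =>
    by_cases hφ : φ i = φ (i + 1)
    · have hx : xH n k (i + 1) ∈ Submodule.span ℤ (Sphi n k φ) :=
        Submodule.subset_span <| .inr <| .inl ⟨i, hi, hin, hφ, rfl⟩
      rw [← hφ, cH_succ_left]
      exact sub_mem (ih (by omega)) hx
    · have hlt : φ (i + 1) < φ (i + 1 - 1) := by
        rw [Nat.add_sub_cancel]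
        exact lt_of_le_of_ne (hmono i hi hin) (Ne.symm hφ)
      exact neg_mem_iff.mp <| Submodule.subset_span <| .inr <| .inr <| .inl
        ⟨i + 1, by omega, hin, .inr hlt, rfl⟩

lemma cH_sub_one_mem_span_Sphi {i : ℕ} (hi : 1 ≤ i) (hin : i ≤ n) :
    cH n k i (φ i - 1) ∈ Submodule.span ℤ (Sphi n k φ) := by
  obtain ⟨d, hd⟩ : ∃ d, i + d = n := ⟨n - i, by omega⟩
  induction d generalizing i with
  | zero =>
    exact Submodule.subset_span <| .inr <| .inr <| .inr ⟨i, hi, hin, .inl (by omega), rfl⟩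
  | succ d ih =>
    by_cases hlt : φ (i + 1) < φ i
    · exact Submodule.subset_span <| .inr <| .inr <| .inr ⟨i, hi, hin, .inr hlt, rfl⟩
    · have hφ : φ i = φ (i + 1) := le_antisymm (not_lt.mp hlt) (hmono i hi (by omega))
      have hx : xH n k (i + 1) ∈ Submodule.span ℤ (Sphi n k φ) :=
        Submodule.subset_span <| .inr <| .inl ⟨i, hi, by omega, hφ, rfl⟩
      have hnext := ih (i := i + 1) (by omega) (by omega) (by omega)
      rw [← hφ, cH_succ_left] at hnext
      exact (Submodule.sub_mem_iff_left _ hx).mp hnext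

lemma vH_mem_span_Sphi {j : ℕ} (hj : 1 ≤ j) (hjk : j ≤ k) :
    vH n k j ∈ Submodule.span ℤ (Sphi n k φ) := by
  by_cases himage : ∃ i, 1 ≤ i ∧ i ≤ n ∧ φ i = j
  · obtain ⟨i, hi, hin, rfl⟩ := himage
    have hpred := cH_sub_one_mem_span_Sphi hmono (k := k) hi hin
    rw [cH_sub_one i hj hjk] at hpred
    exact (Submodule.add_mem_iff_right _ (cH_mem_span_Sphi hmono hi hin)).mp hpred
  · push Not at himage
    exact Submodule.subset_span <| .inl ⟨j, hj, hjk, himage, rfl⟩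

variable (hrange : ∀ i, 1 ≤ i → i ≤ n → 1 ≤ φ i ∧ φ i ≤ k)
include hrange

lemma cH_zero_mem_span_Sphi {i : ℕ} (hin : i ≤ n) :
    cH n k i 0 ∈ Submodule.span ℤ (Sphi n k φ) := by
  have hsum : ∀ j ≤ k, ∑ l ∈ Ioc 0 j, vH n k l ∈ Submodule.span ℤ (Sphi n k φ) := fun j hj =>
    Submodule.sum_mem _ fun l hl =>
      vH_mem_span_Sphi hmono (mem_Ioc.mp hl).1 ((mem_Ioc.mp hl).2.trans hj)
  rcases Nat.eq_zero_or_pos i with rfl | hi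
  · rw [cH, Icc_add_one_left_eq_Ioc, Icc_eq_empty_of_lt zero_lt_one, sum_empty, sub_zero]
    exact hsum k le_rfl
  · rw [cH_eq_cH_add_sum i (Nat.zero_le _) (hrange i hi hin).2]
    exact add_mem (cH_mem_span_Sphi hmono hi hin) (hsum _ (hrange i hi hin).2)

lemma xH_mem_span_Sphi {i : ℕ} (hi : 1 ≤ i) (hin : i ≤ n + 1) :
    xH n k i ∈ Submodule.span ℤ (Sphi n k φ) := by
  obtain ⟨i, rfl⟩ : ∃ i', i = i' + 1 := ⟨i - 1, by omega⟩
  rcases Nat.lt_or_ge i n with hlt | hge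
  · rw [show xH n k (i + 1) = cH n k i 0 - cH n k (i + 1) 0 by rw [cH_succ_left]; abel]
    exact sub_mem (cH_zero_mem_span_Sphi hmono hrange (by omega))
      (cH_zero_mem_span_Sphi hmono hrange hlt)
  · rw [show i = n by omega, ← cH_self_zero]
    exact cH_zero_mem_span_Sphi hmono hrange le_rfl

lemma span_Sphi_eq_top : Submodule.span ℤ (Sphi n k φ) = ⊤ :=
  eq_top_of_xH_mem_of_vH_mem (fun _ hi hin => xH_mem_span_Sphi hmono hrange hi hin)
    fun _ hj hjk => vH_mem_span_Sphi hmono hj hjk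

end Spanning

/-- `inl i` is the element of `S_φ` attached to the position `i + 1`, `inr j` the one attached to
the value `j + 1`; `Nat.findGreatest` returns the last preimage of `j + 1`, or `0` if there is
none. -/
noncomputable def sphiFamily (n k : ℕ) (φ : ℕ → ℕ) : Fin n ⊕ Fin k → HLat n k :=
  Sum.elim
    (fun i => if 1 ≤ (i : ℕ) ∧ φ i = φ (i + 1) then xH n k (i + 1)
      else -cH n k (i + 1) (φ (i + 1)))
    (fun j => if Nat.findGreatest (φ · = j + 1) n = 0 then vH n k (j + 1)
      else cH n k (Nat.findGreatest (φ · = j + 1) n) j)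

section Enumeration

variable {n k : ℕ} {φ : ℕ → ℕ}

lemma findGreatest_eq_of_last (hmono : ∀ i, 1 ≤ i → i + 1 ≤ n → φ (i + 1) ≤ φ i) {i : ℕ}
    (hi : 1 ≤ i) (hin : i ≤ n) (hlast : i = n ∨ φ (i + 1) < φ i) :
    Nat.findGreatest (φ · = φ i) n = i := by
  have hanti : AntitoneOn φ (Set.Icc 1 n) :=
    antitoneOn_of_add_one_le Set.ordConnected_Icc fun a _ ha ha' => hmono a ha.1 ha'.2
  refine Nat.findGreatest_eq_iff.mpr ⟨hin, fun _ => rfl, fun m him hmn hm => ?_⟩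
  rcases hlast with rfl | hlt
  · omega
  · have : φ m ≤ φ (i + 1) := hanti ⟨by omega, by omega⟩ ⟨by omega, hmn⟩ him
    omega

lemma Sphi_subset_range_sphiFamily (hmono : ∀ i, 1 ≤ i → i + 1 ≤ n → φ (i + 1) ≤ φ i)
    (hrange : ∀ i, 1 ≤ i → i ≤ n → 1 ≤ φ i ∧ φ i ≤ k) :
    Sphi n k φ ⊆ Set.range (sphiFamily n k φ) := by
  rintro _ (⟨j, hj, hjk, hnot, rfl⟩ | ⟨i, hi, hin, hφ, rfl⟩ | ⟨i, hi, hin, hfirst, rfl⟩ |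
    ⟨i, hi, hin, hlast, rfl⟩)
  · refine ⟨.inr ⟨j - 1, by omega⟩, ?_⟩
    have hnone : Nat.findGreatest (φ · = j) n = 0 :=
      Nat.findGreatest_eq_zero_iff.mpr fun i hi hin => hnot i hi hin
    simp [sphiFamily, Nat.sub_add_cancel hj, hnone]
  · exact ⟨.inl ⟨i, by omega⟩, by simp [sphiFamily, hi, hφ]⟩
  · refine ⟨.inl ⟨i - 1, by omega⟩, ?_⟩
    have hdesc : ¬(1 ≤ i - 1 ∧ φ (i - 1) = φ i) := by omega
    simp [sphiFamily, Nat.sub_add_cancel hi, hdesc]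
  · obtain ⟨hφ, hφk⟩ := hrange i hi hin
    refine ⟨.inr ⟨φ i - 1, by omega⟩, ?_⟩
    simp [sphiFamily, Nat.sub_add_cancel hφ, findGreatest_eq_of_last hmono hi hin hlast,
      Nat.one_le_iff_ne_zero.mp hi]

end Enumeration

theorem stmt_3 (n k : ℕ) (φ : ℕ → ℕ)
    (hmono : ∀ i, 1 ≤ i → i + 1 ≤ n → φ (i + 1) ≤ φ i)
    (hrange : ∀ i, 1 ≤ i → i ≤ n → 1 ≤ φ i ∧ φ i ≤ k) :
    Submodule.span ℤ (Sphi n k φ) = ⊤ ∧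
    LinearIndependent ℤ (fun s : Sphi n k φ => (s : HLat n k)) := by
  have hspan := span_Sphi_eq_top hmono hrange
  have hsub := Sphi_subset_range_sphiFamily hmono hrange
  have hfamily : LinearIndependent ℤ (sphiFamily n k φ) :=
    linearIndependent_of_span_eq_top_of_surjective
      (top_le_iff.mp (hspan ▸ Submodule.span_mono hsub)) coordH_surjective
  exact ⟨hspan, hfamily.linearIndepOn_id.mono hsub⟩
end

section
/- Fix a nonincreasing φ : [1,n] → [1,k] and let ⟨S_φ⟩_{ℤ≥0} denote the set of nonnegative integer combinations of elements of S_φ in the lattice H. Then c_{i,j} ∈ ⟨S_φ⟩_{ℤ≥0} whenever j < φ(i), and −c_{i,j} ∈ ⟨S_φ⟩_{ℤ≥0} whenever j ≥ φ(i). -/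
/-!
The homology lattice `H` of the `(n+k+1)`-punctured sphere:
`H = (ℤx₁ ⊕ ⋯ ⊕ ℤx_{n+1} ⊕ ℤv₁ ⊕ ⋯ ⊕ ℤv_k)/(x₁+⋯+x_{n+1} − v₁−⋯−v_k)`,
with the classes `c_{i,j} = v_k + ⋯ + v_{j+1} − x₁ − ⋯ − x_i`.
All indices are 1-based, as in the paper.
-/

open Finset

/-!
Both claims reduce to the generators of `S_φ` through the telescoping identities
`c_{i,j} = c_{i+1,j} + x_{i+1}` and `c_{i,j} = v_{j+1} + ⋯ + v_{j'} + c_{i,j'}`.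
Following a run of equal values of `φ` down to its first index gives `−c_{i,φ(i)}`, and up
to its last index gives `c_{i,φ(i)−1}`. Their sum is `v_{φ(i)}`, so every `v_m` lies in
`⟨S_φ⟩`, and sums of the `v_m` then connect `c_{i,j}` with `c_{i,φ(i)−1}` and `−c_{i,j}`
with `−c_{i,φ(i)}`.
-/

lemma cH_eq_cH_succ_add_xH (n k i j : ℕ) :
    cH n k i j = cH n k (i + 1) j + xH n k (i + 1) := by
  unfold cH
  rw [sum_Icc_succ_top (Nat.le_add_left 1 i)]
  abel

lemma cH_eq_sum_vH_add_cH {n k j j' : ℕ} (i : ℕ) (h : j ≤ j') (h' : j' ≤ k) :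
    cH n k i j = (∑ m ∈ Ioc j j', vH n k m) + cH n k i j' := by
  unfold cH
  simp only [Icc_add_one_left_eq_Ioc]
  rw [← sum_Ioc_consecutive _ h h']
  abel

section Closure

variable {n k : ℕ} {φ : ℕ → ℕ}

lemma vH_mem_Sphi {j : ℕ} (hj : 1 ≤ j) (hjk : j ≤ k)
    (hφ : ∀ i, 1 ≤ i → i ≤ n → φ i ≠ j) : vH n k j ∈ Sphi n k φ :=
  Or.inl ⟨j, hj, hjk, hφ, rfl⟩

lemma xH_succ_mem_Sphi {i : ℕ} (hi : 1 ≤ i) (hin : i + 1 ≤ n) (hφ : φ i = φ (i + 1)) :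
    xH n k (i + 1) ∈ Sphi n k φ :=
  Or.inr <| Or.inl ⟨i, hi, hin, hφ, rfl⟩

lemma neg_cH_mem_Sphi {i : ℕ} (hi : 1 ≤ i) (hin : i ≤ n) (hφ : i = 1 ∨ φ i < φ (i - 1)) :
    -cH n k i (φ i) ∈ Sphi n k φ :=
  Or.inr <| Or.inr <| Or.inl ⟨i, hi, hin, hφ, rfl⟩

lemma cH_pred_mem_Sphi {i : ℕ} (hi : 1 ≤ i) (hin : i ≤ n)
    (hφ : i = n ∨ φ (i + 1) < φ i) : cH n k i (φ i - 1) ∈ Sphi n k φ :=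
  Or.inr <| Or.inr <| Or.inr ⟨i, hi, hin, hφ, rfl⟩

lemma neg_cH_mem_closure_Sphi (hmono : ∀ i, 1 ≤ i → i + 1 ≤ n → φ (i + 1) ≤ φ i)
    {i : ℕ} (hi : 1 ≤ i) (hin : i ≤ n) :
    -cH n k i (φ i) ∈ AddSubmonoid.closure (Sphi n k φ) := by
  induction i, hi using Nat.le_induction with
  | base => exact AddSubmonoid.subset_closure (neg_cH_mem_Sphi le_rfl hin (.inl rfl))
  | succ i hi ih =>
    rcases (hmono i hi hin).lt_or_eq with hlt | heq
    · exact AddSubmonoid.subset_closure (neg_cH_mem_Sphi (by omega) hin (.inr hlt))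
    · have hstep : -cH n k (i + 1) (φ i) = -cH n k i (φ i) + xH n k (i + 1) := by
        rw [cH_eq_cH_succ_add_xH n k i]; abel
      rw [heq, hstep]
      exact add_mem (ih (by omega))
        (AddSubmonoid.subset_closure (xH_succ_mem_Sphi hi hin heq.symm))

lemma cH_pred_mem_closure_Sphi (hmono : ∀ i, 1 ≤ i → i + 1 ≤ n → φ (i + 1) ≤ φ i)
    {i : ℕ} (hi : 1 ≤ i) (hin : i ≤ n) :
    cH n k i (φ i - 1) ∈ AddSubmonoid.closure (Sphi n k φ) := by
  induction hin using Nat.decreasingInduction with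
  | self => exact AddSubmonoid.subset_closure (cH_pred_mem_Sphi hi le_rfl (.inl rfl))
  | of_succ i hin ih =>
    rcases (hmono i hi hin).lt_or_eq with hlt | heq
    · exact AddSubmonoid.subset_closure (cH_pred_mem_Sphi hi hin.le (.inr hlt))
    · rw [cH_eq_cH_succ_add_xH, ← heq]
      exact add_mem (ih (by omega))
        (AddSubmonoid.subset_closure (xH_succ_mem_Sphi hi hin heq.symm))

lemma vH_mem_closure_Sphi (hmono : ∀ i, 1 ≤ i → i + 1 ≤ n → φ (i + 1) ≤ φ i)
    {m : ℕ} (hm : 1 ≤ m) (hmk : m ≤ k) :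
    vH n k m ∈ AddSubmonoid.closure (Sphi n k φ) := by
  by_cases him : ∃ i, 1 ≤ i ∧ i ≤ n ∧ φ i = m
  · obtain ⟨i, hi, hin, rfl⟩ := him
    have hnotMin : ¬IsMin (φ i) := by
      simp only [isMin_iff_eq_bot, Nat.bot_eq_zero]; omega
    have hsplit := cH_eq_sum_vH_add_cH (n := n) i (Nat.sub_le (φ i) 1) hmk
    rw [Ioc_sub_one_left_eq_Icc_of_not_isMin hnotMin, Icc_self, sum_singleton,
      ← sub_eq_iff_eq_add] at hsplit
    rw [← hsplit, sub_eq_add_neg]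
    exact add_mem (cH_pred_mem_closure_Sphi hmono hi hin) (neg_cH_mem_closure_Sphi hmono hi hin)
  · push Not at him
    exact AddSubmonoid.subset_closure (vH_mem_Sphi hm hmk him)

lemma sum_vH_mem_closure_Sphi (hmono : ∀ i, 1 ≤ i → i + 1 ≤ n → φ (i + 1) ≤ φ i)
    {a b : ℕ} (hb : b ≤ k) :
    ∑ m ∈ Ioc a b, vH n k m ∈ AddSubmonoid.closure (Sphi n k φ) :=
  sum_mem fun m hm => vH_mem_closure_Sphi hmono (by grind) (by grind)

end Closure

theorem stmt_4 (n k : ℕ) (φ : ℕ → ℕ)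
    (hmono : ∀ i, 1 ≤ i → i + 1 ≤ n → φ (i + 1) ≤ φ i)
    (hrange : ∀ i, 1 ≤ i → i ≤ n → 1 ≤ φ i ∧ φ i ≤ k) :
    (∀ i j : ℕ, 1 ≤ i → i ≤ n → j < φ i →
      cH n k i j ∈ AddSubmonoid.closure (Sphi n k φ)) ∧
    (∀ i j : ℕ, 1 ≤ i → i ≤ n → φ i ≤ j → j ≤ k →
      - cH n k i j ∈ AddSubmonoid.closure (Sphi n k φ)) := by
  constructor
  · intro i j hi hin hj
    have hφk : φ i - 1 ≤ k := (Nat.sub_le _ _).trans (hrange i hi hin).2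
    rw [cH_eq_sum_vH_add_cH i (by omega : j ≤ φ i - 1) hφk]
    exact add_mem (sum_vH_mem_closure_Sphi hmono hφk) (cH_pred_mem_closure_Sphi hmono hi hin)
  · intro i j hi hin hj hjk
    have hsplit : -cH n k i j = (∑ m ∈ Ioc (φ i) j, vH n k m) + -cH n k i (φ i) := by
      rw [cH_eq_sum_vH_add_cH i hj hjk]; abel
    rw [hsplit]
    exact add_mem (sum_vH_mem_closure_Sphi hmono hjk) (neg_cH_mem_closure_Sphi hmono hi hin)
end

section
/- Let R be a commutative ring and (a,b,c) a regular sequence in R. Consider the Koszul matrix factorizations {bc,a} and {ca,b} of the element W = abc. Then the 2-periodic Hom-complex Hom({bc,a},{ca,b}) has cohomology isomorphic to R/(a,b) concentrated in odd degree. -/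
/-!
For Koszul matrix factorizations `E = {uE, vE}` and `F = {uF, vF}` of `W = uE·vE = uF·vF`
(where `{u,v}` is the rank-one matrix factorization `R →^v R →^u R`), the internal Hom
`Hom(E,F)` is the 2-periodic complex (matrix factorization of `0`) with
`Hom₀ = E₀^*⊗F₀ ⊕ E₁^*⊗F₁ ≅ R²`, `Hom₁ = E₀^*⊗F₁ ⊕ E₁^*⊗F₀ ≅ R²`, and differentials
`Dev(s,t) = (uF·s − uE·t, vF·t − vE·s)` (even → odd) and
`Dodd(g₀,g₁) = (vF·g₀ + uE·g₁, uF·g₁ + vE·g₀)` (odd → even).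
Its cohomology is `Heven = ker Dev / im Dodd` and `Hodd = ker Dodd / im Dev`.
-/

variable {R : Type} [CommRing R]

/-- The even-to-odd differential of `Hom({uE,vE},{uF,vF})`. -/
def Dev (uE vE uF vF : R) : (R × R) →ₗ[R] (R × R) where
  toFun p := (uF * p.1 - uE * p.2, vF * p.2 - vE * p.1)
  map_add' p q := by
    refine Prod.ext ?_ ?_ <;> simp only [Prod.fst_add, Prod.snd_add] <;> ring
  map_smul' c p := by
    refine Prod.ext ?_ ?_ <;>
      simp only [Prod.smul_fst, Prod.smul_snd, smul_eq_mul, RingHom.id_apply] <;> ring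

/-- The odd-to-even differential of `Hom({uE,vE},{uF,vF})`. -/
def Dodd (uE vE uF vF : R) : (R × R) →ₗ[R] (R × R) where
  toFun p := (vF * p.1 + uE * p.2, uF * p.2 + vE * p.1)
  map_add' p q := by
    refine Prod.ext ?_ ?_ <;> simp only [Prod.fst_add, Prod.snd_add] <;> ring
  map_smul' c p := by
    refine Prod.ext ?_ ?_ <;>
      simp only [Prod.smul_fst, Prod.smul_snd, smul_eq_mul, RingHom.id_apply] <;> ring

/-- Even cohomology of the 2-periodic complex `Hom({uE,vE},{uF,vF})`. -/
abbrev HomEven (uE vE uF vF : R) :=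
  LinearMap.ker (Dev uE vE uF vF) ⧸
    Submodule.comap (LinearMap.ker (Dev uE vE uF vF)).subtype
      (LinearMap.range (Dodd uE vE uF vF))

/-- Odd cohomology of the 2-periodic complex `Hom({uE,vE},{uF,vF})`. -/
abbrev HomOdd (uE vE uF vF : R) :=
  LinearMap.ker (Dodd uE vE uF vF) ⧸
    Submodule.comap (LinearMap.ker (Dodd uE vE uF vF)).subtype
      (LinearMap.range (Dev uE vE uF vF))

/-!
The differentials of `Hom({bc,a},{ca,b})` are `Dev(s,t) = (c(as - bt), bt - as)` and
`Dodd(p,q) = (b(p + cq), a(p + cq))`. Since `a` is a nonzerodivisor, `ker Dodd` is the line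
`p = -cq`, a free module of rank one parametrised by `q`, in which `im Dev` becomes the ideal
`(a,b)`; this gives the odd cohomology. An even cocycle satisfies `bt = as`, and regularity of
`b` modulo `a` forces `(s,t) = (bh, ah) = Dodd(h,0)`, so the even cohomology vanishes.
-/

open LinearMap RingTheory.Sequence
open scoped Pointwise

theorem mem_span_singleton_of_mul_mem {a b t : R} (hb : IsSMulRegular (QuotSMulTop a R) b)
    (h : b * t ∈ Ideal.span {a}) : t ∈ Ideal.span {a} := by
  have hspan : a • (⊤ : Submodule R R) = Ideal.span {a} := by
    rw [← Submodule.ideal_span_singleton_smul, smul_eq_mul, Ideal.mul_top]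
  rw [← hspan] at h ⊢
  exact mem_of_isSMulRegular_quotient_of_smul_mem hb h

section Koszul

variable {a : R} (b c : R)

theorem mem_ker_Dodd_iff (ha : IsSMulRegular R a) {p : R × R} :
    p ∈ ker (Dodd (b * c) a (c * a) b) ↔ p.1 = -(c * p.2) := by
  simp only [mem_ker, Dodd, coe_mk, AddHom.coe_mk, Prod.ext_iff, Prod.fst_zero, Prod.snd_zero]
  constructor
  · rintro ⟨-, h⟩
    have : a * (p.1 + c * p.2) = a * 0 := by linear_combination h
    linear_combination ha this
  · intro h
    constructor <;> rw [h] <;> ring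

theorem ker_Dev_le_range_Dodd (ha : IsSMulRegular R a) (hb : IsSMulRegular (QuotSMulTop a R) b) :
    ker (Dev (b * c) a (c * a) b) ≤ range (Dodd (b * c) a (c * a) b) := by
  rintro ⟨s, t⟩ hst
  simp only [mem_ker, Dev, coe_mk, AddHom.coe_mk, Prod.ext_iff, Prod.fst_zero,
    Prod.snd_zero] at hst
  obtain ⟨h, rfl⟩ : ∃ h, h * a = t :=
    Ideal.mem_span_singleton'.mp <| mem_span_singleton_of_mul_mem hb <|
      Ideal.mem_span_singleton'.mpr ⟨s, by linear_combination -hst.2⟩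
  have hs : s = b * h := ha (by linear_combination -hst.2)
  exact ⟨(h, 0), by simp [Dodd, hs, mul_comm]⟩

theorem subsingleton_HomEven (ha : IsSMulRegular R a) (hb : IsSMulRegular (QuotSMulTop a R) b) :
    Subsingleton (HomEven (b * c) a (c * a) b) := by
  rw [Submodule.Quotient.subsingleton_iff, Submodule.comap_subtype_eq_top]
  exact ker_Dev_le_range_Dodd b c ha hb

noncomputable def kerDoddEquiv (ha : IsSMulRegular R a) :
    ker (Dodd (b * c) a (c * a) b) ≃ₗ[R] R :=
  LinearEquiv.ofBijective (snd R R R ∘ₗ (ker _).subtype)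
    ⟨fun p q hpq => Subtype.ext <| Prod.ext
        (by rw [(mem_ker_Dodd_iff b c ha).mp p.2, (mem_ker_Dodd_iff b c ha).mp q.2,
          show (p : R × R).2 = (q : R × R).2 from hpq]) hpq,
      fun q => ⟨⟨(-(c * q), q), (mem_ker_Dodd_iff b c ha).mpr rfl⟩, rfl⟩⟩

@[simp]
theorem kerDoddEquiv_apply (ha : IsSMulRegular R a) (p : ker (Dodd (b * c) a (c * a) b)) :
    kerDoddEquiv b c ha p = (p : R × R).2 :=
  rfl

theorem map_kerDoddEquiv_comap_range_Dev (ha : IsSMulRegular R a) :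
    (Submodule.comap (ker (Dodd (b * c) a (c * a) b)).subtype
        (range (Dev (b * c) a (c * a) b))).map (kerDoddEquiv b c ha).toLinearMap =
      Ideal.span {a, b} := by
  ext q
  simp only [Submodule.mem_map, Submodule.mem_comap, mem_range, LinearEquiv.coe_coe,
    kerDoddEquiv_apply, Submodule.coe_subtype]
  constructor
  · rintro ⟨p, ⟨⟨s, t⟩, hst⟩, rfl⟩
    rw [← hst]
    exact Ideal.mem_span_pair.mpr ⟨-s, t, by simp only [Dev, coe_mk, AddHom.coe_mk]; ring⟩
  · intro hq
    obtain ⟨u, v, huv⟩ := Ideal.mem_span_pair.mp hq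
    refine ⟨⟨(-(c * q), q), (mem_ker_Dodd_iff b c ha).mpr rfl⟩, ⟨(-u, v), ?_⟩, rfl⟩
    simp only [Dev, coe_mk, AddHom.coe_mk, ← huv]
    refine Prod.ext ?_ ?_ <;> ring

noncomputable def homOddEquiv (ha : IsSMulRegular R a) :
    HomOdd (b * c) a (c * a) b ≃ₗ[R] R ⧸ Ideal.span {a, b} :=
  Submodule.Quotient.equiv _ _ (kerDoddEquiv b c ha) (map_kerDoddEquiv_comap_range_Dev b c ha)

end Koszul

theorem stmt_8 (R : Type) [CommRing R] (a b c : R)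
    (hreg : RingTheory.Sequence.IsRegular R [a, b, c]) :
    Subsingleton (HomEven (b * c) a (c * a) b) ∧
    Nonempty ((HomOdd (b * c) a (c * a) b) ≃ₗ[R] (R ⧸ Ideal.span {a, b})) := by
  obtain ⟨ha, hbc⟩ := (isWeaklyRegular_cons_iff R a _).mp hreg.toIsWeaklyRegular
  have hb : IsSMulRegular (QuotSMulTop a R) b := ((isWeaklyRegular_cons_iff _ b _).mp hbc).1
  exact ⟨subsingleton_HomEven b c ha hb, ⟨homOddEquiv b c ha⟩⟩
end

section
/- Let k be a field and A₁,ₖ the path algebra of the quiver with vertices 0,1,…,k, arrows ℓᵢ : (i−1) → i and rᵢ : i → (i−1) for 1 ≤ i ≤ k, and a loop x₁ at vertex k, modulo the relations ℓ_{i+1}ℓ_i = 0, r_i r_{i+1} = 0 (for 1 ≤ i ≤ k−1), x₁ℓ_k = 0, r_k x₁ = 0. Then the subalgebra eₖ A₁,ₖ eₖ of endomorphisms of vertex k is isomorphic to k[X₁,U_k]/(X₁U_k), where X₁ corresponds to x₁ and U_k to r_kℓ_k = ℓ_k r_k; and e₀ A₁,ₖ e₀ ≅ k[U₁] where U₁ =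 r₁ℓ₁. -/
/-!
The algebra `A₁,ₖ`: the path algebra of the quiver with vertices `0,1,…,k`, arrows
`ℓᵢ : (i−1) → i` and `rᵢ : i → (i−1)` for `1 ≤ i ≤ k`, and a loop `x₁` at vertex `k`,
modulo the relations `ℓ_{i+1}ℓ_i = 0`, `rᵢr_{i+1} = 0`, `x₁ℓ_k = 0`, `r_kx₁ = 0`.
(Products are composition: `fg = f ∘ g`.)

We present it as `RingQuot` of the free algebra on generators
`e i` (`0 ≤ i ≤ k`, the vertex idempotents), `l i` (= `ℓ_{i+1} : i → i+1`, `0 ≤ i < k`),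
`r i` (= `r_{i+1} : i+1 → i`, `0 ≤ i < k`) and `x` (= `x₁`), with the path-algebra
relations (idempotency, orthogonality, `∑ e i = 1`, source/target relations) together
with the relations above; out-of-range generators are set to `0`.
-/

/-- Generators of the path algebra `A₁,ₖ`. -/
inductive PGen : Type
  | e : ℕ → PGen
  | l : ℕ → PGen
  | r : ℕ → PGen
  | x : PGen

open FreeAlgebra

/-- The defining relations of `A₁,ₖ`. -/
inductive PRel (𝕜 : Type) [CommRing 𝕜] (k : ℕ) :
    FreeAlgebra 𝕜 PGen → FreeAlgebra 𝕜 PGen → Prop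
  | e_idem (i : ℕ) (h : i ≤ k) :
      PRel 𝕜 k (ι 𝕜 (PGen.e i) * ι 𝕜 (PGen.e i)) (ι 𝕜 (PGen.e i))
  | e_orth (i j : ℕ) (hi : i ≤ k) (hj : j ≤ k) (hij : i ≠ j) :
      PRel 𝕜 k (ι 𝕜 (PGen.e i) * ι 𝕜 (PGen.e j)) 0
  | e_sum : PRel 𝕜 k (∑ i ∈ Finset.range (k + 1), ι 𝕜 (PGen.e i)) 1
  | e_oob (i : ℕ) (h : k < i) : PRel 𝕜 k (ι 𝕜 (PGen.e i)) 0
  | l_src (i : ℕ) (h : i < k) :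
      PRel 𝕜 k (ι 𝕜 (PGen.l i) * ι 𝕜 (PGen.e i)) (ι 𝕜 (PGen.l i))
  | l_tgt (i : ℕ) (h : i < k) :
      PRel 𝕜 k (ι 𝕜 (PGen.e (i + 1)) * ι 𝕜 (PGen.l i)) (ι 𝕜 (PGen.l i))
  | l_oob (i : ℕ) (h : k ≤ i) : PRel 𝕜 k (ι 𝕜 (PGen.l i)) 0
  | r_src (i : ℕ) (h : i < k) :
      PRel 𝕜 k (ι 𝕜 (PGen.r i) * ι 𝕜 (PGen.e (i + 1))) (ι 𝕜 (PGen.r i))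
  | r_tgt (i : ℕ) (h : i < k) :
      PRel 𝕜 k (ι 𝕜 (PGen.e i) * ι 𝕜 (PGen.r i)) (ι 𝕜 (PGen.r i))
  | r_oob (i : ℕ) (h : k ≤ i) : PRel 𝕜 k (ι 𝕜 (PGen.r i)) 0
  | x_vertex : PRel 𝕜 k (ι 𝕜 (PGen.e k) * ι 𝕜 PGen.x * ι 𝕜 (PGen.e k)) (ι 𝕜 PGen.x)
  -- `ℓ_{i+2} ℓ_{i+1} = 0`
  | ll (i : ℕ) (h : i + 1 < k) : PRel 𝕜 k (ι 𝕜 (PGen.l (i + 1)) * ι 𝕜 (PGen.l i)) 0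
  -- `r_{i+1} r_{i+2} = 0`
  | rr (i : ℕ) (h : i + 1 < k) : PRel 𝕜 k (ι 𝕜 (PGen.r i) * ι 𝕜 (PGen.r (i + 1))) 0
  -- `x₁ ℓ_k = 0`
  | xl (h : 0 < k) : PRel 𝕜 k (ι 𝕜 PGen.x * ι 𝕜 (PGen.l (k - 1))) 0
  -- `r_k x₁ = 0`
  | rx (h : 0 < k) : PRel 𝕜 k (ι 𝕜 (PGen.r (k - 1)) * ι 𝕜 PGen.x) 0

/-- The algebra `A₁,ₖ`. -/
abbrev PathAlg (𝕜 : Type) [CommRing 𝕜] (k : ℕ) := RingQuot (PRel 𝕜 k)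

variable (𝕜 : Type) [CommRing 𝕜] (k : ℕ)

/-- The idempotent `eᵢ` in `A₁,ₖ`. -/
noncomputable def eP (i : ℕ) : PathAlg 𝕜 k := RingQuot.mkAlgHom 𝕜 (PRel 𝕜 k) (ι 𝕜 (PGen.e i))

/-- The arrow `ℓ_{i+1} : i → i+1` in `A₁,ₖ`. -/
noncomputable def lP (i : ℕ) : PathAlg 𝕜 k := RingQuot.mkAlgHom 𝕜 (PRel 𝕜 k) (ι 𝕜 (PGen.l i))

/-- The arrow `r_{i+1} : i+1 → i` in `A₁,ₖ`. -/
noncomputable def rP (i : ℕ) : PathAlg 𝕜 k := RingQuot.mkAlgHom 𝕜 (PRel 𝕜 k) (ι 𝕜 (PGen.r i))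

/-- The loop `x₁` at vertex `k` in `A₁,ₖ`. -/
noncomputable def xP : PathAlg 𝕜 k := RingQuot.mkAlgHom 𝕜 (PRel 𝕜 k) (ι 𝕜 PGen.x)

open MvPolynomial

/-!
Every element of `A₁,ₖ` is a linear combination of normal-form paths `eᵢ`, `ℓ uⁿ`, `r vⁿ`,
`uⁿ⁺¹`, `vⁿ⁺¹`, `xⁿ⁺¹`: left multiplication by a generator sends a normal path to a normal path
or to `0`. Sandwiching between `e_t` kills every path that is not a loop at `t`, so the corner
`e_t A e_t` is spanned by the loops at `t`, which are the images of the monomials. For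
injectivity, `A₁,ₖ` acts by `(k+1) × (k+1)` matrices over `ZMod 2 → 𝕜[X₀, X₁]`; the `(t, t)`
entry of the image of `e_t · f(p)` is the image of `p` under an evaluation whose kernel is
exactly `(X₀X₁)` (respectively `0`).
-/

section Corner

variable {R A B : Type*} [CommSemiring R] [Semiring A] [Algebra R A] [Semiring B] [Algebra R B]

def cornerHom (e : A) (f : B →ₐ[R] A) : B →ₗ[R] A := LinearMap.mulLeft R e ∘ₗ f.toLinearMap

variable {e : A} {f : B →ₐ[R] A}

@[simp]
lemma cornerHom_apply (b : B) : cornerHom e f b = e * f b := rfl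

lemma cornerHom_one : cornerHom e f 1 = e := by simp

lemma cornerHom_mul (he : IsIdempotentElem e) (hc : ∀ b, Commute e (f b)) (p q : B) :
    cornerHom e f (p * q) = cornerHom e f p * cornerHom e f q := by
  simp only [cornerHom_apply, map_mul, mul_assoc]
  rw [← mul_assoc (f p) e, ← (hc p).eq, mul_assoc e (f p), ← mul_assoc e e, he.eq]

lemma mul_cornerHom_mul (he : IsIdempotentElem e) (hc : ∀ b, Commute e (f b)) (b : B) :
    e * cornerHom e f b * e = cornerHom e f b := by
  rw [cornerHom_apply, ← mul_assoc, he.eq, mul_assoc, ← (hc b).eq, ← mul_assoc, he.eq]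

lemma commute_of_adjoin_eq_top {s : Set B} (hs : Algebra.adjoin R s = ⊤) {a : A}
    (h : ∀ b ∈ s, Commute a (f b)) (b : B) : Commute a (f b) := by
  have hb : f b ∈ Algebra.adjoin R (f '' s) := by
    rw [← AlgHom.map_adjoin, hs]; exact ⟨b, trivial, rfl⟩
  refine (Algebra.adjoin_le ?_ : _ ≤ Subalgebra.centralizer R {a}) hb a rfl
  rintro _ ⟨b, hb, rfl⟩ _ rfl
  exact (h b hb).eq

end Corner

section Evaluation

open scoped IsMulCommutative

variable {σ R A : Type*} [CommSemiring R] [Semiring A] [Algebra R A]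

noncomputable def aevalOfCommute (a : σ → A) (h : ∀ i j, Commute (a i) (a j)) :
    MvPolynomial σ R →ₐ[R] A :=
  letI : IsMulCommutative (Algebra.adjoin R (Set.range a)) :=
    Algebra.isMulCommutative_adjoin R (by rintro _ ⟨i, rfl⟩ _ ⟨j, rfl⟩; exact h i j)
  (Algebra.adjoin R (Set.range a)).val.comp
    (aeval fun i => ⟨a i, Algebra.subset_adjoin ⟨i, rfl⟩⟩)

@[simp]
lemma aevalOfCommute_X (a : σ → A) (h : ∀ i j, Commute (a i) (a j)) (i : σ) :
    aevalOfCommute (R := R) a h (X i) = a i := by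
  simp [aevalOfCommute]

end Evaluation

section NodeRing

variable {σ R : Type*} [CommRing R]

lemma X_dvd_sub_aeval_update [DecidableEq σ] (i : σ) (p : MvPolynomial σ R) :
    X i ∣ p - aeval (Function.update (X : σ → MvPolynomial σ R) i 0) p := by
  induction p using MvPolynomial.induction_on with
  | C a => simp
  | add p q hp hq => simpa [add_sub_add_comm] using dvd_add hp hq
  | mul_X p j hp =>
    by_cases hj : j = i
    · subst hj; simp
    · simpa [hj, ← sub_mul] using dvd_mul_of_dvd_left hp (X j)

lemma X_dvd_of_aeval_update_eq_zero [DecidableEq σ] {i : σ} {p : MvPolynomial σ R}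
    (hp : aeval (Function.update (X : σ → MvPolynomial σ R) i 0) p = 0) : X i ∣ p := by
  simpa only [hp, sub_zero] using X_dvd_sub_aeval_update i p

lemma single_mul_single_of_ne {ι M : Type*} [DecidableEq ι] [MulZeroClass M] {i j : ι}
    (h : i ≠ j) (a b : M) : (Pi.single i a : ι → M) * Pi.single j b = 0 := by
  ext c
  by_cases hc : c = i
  · subst hc; simp [h]
  · simp [hc]

lemma mem_span_X_mul_X_of_map_eq_zero [IsDomain R] {ι : Type*} [DecidableEq ι] {c₀ c₁ : ι}
    (hc : c₀ ≠ c₁) {g : MvPolynomial (Fin 2) R →ₐ[R] ι → MvPolynomial (Fin 2) R}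
    (hg₀ : g (X 0) = Pi.single c₀ (X 0)) (hg₁ : g (X 1) = Pi.single c₁ (X 1))
    {p : MvPolynomial (Fin 2) R} (hp : g p = 0) : p ∈ Ideal.span {X 0 * X 1} := by
  -- the `c₀`- and `c₁`-components of `g p` are `p(X₀, 0)` and `p(0, X₁)`
  have hcoord (c : ι) (v : Fin 2 → MvPolynomial (Fin 2) R) (hv : ∀ j, v j = g (X j) c) :
      aeval v p = 0 := by
    have : (Pi.evalAlgHom R (fun _ : ι => MvPolynomial (Fin 2) R) c).comp g = aeval v :=
      MvPolynomial.algHom_ext fun j => by simp [hv]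
    rw [← this, AlgHom.comp_apply, hp, map_zero]
  obtain ⟨q, rfl⟩ : X 1 ∣ p := X_dvd_of_aeval_update_eq_zero
    (hcoord c₀ _ fun j => by fin_cases j <;> simp [hg₀, hg₁, hc.symm])
  have h₀ : X 0 ∣ X 1 * q := X_dvd_of_aeval_update_eq_zero
    (hcoord c₁ _ fun j => by fin_cases j <;> simp [hg₀, hg₁, hc])
  obtain ⟨r, rfl⟩ := (X_dvd_mul_iff.mp h₀).resolve_left (by simp)
  exact Ideal.mem_span_singleton.mpr ⟨r, by ring⟩

lemma aeval_single_X_injective {ι : Type*} [DecidableEq ι] (c : ι) (i : σ) :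
    Function.Injective
      (Polynomial.aeval (R := R) (Pi.single c (X i) : ι → MvPolynomial σ R)) := by
  let g : (ι → MvPolynomial σ R) →ₐ[R] Polynomial R :=
    (aeval fun _ => Polynomial.X).comp (Pi.evalAlgHom R _ c)
  have hg : g.comp (Polynomial.aeval (Pi.single c (X i))) = AlgHom.id R _ :=
    Polynomial.algHom_ext (by simp [g])
  exact Function.LeftInverse.injective (g := g) fun p => by
    simpa using congrArg (· p) (congrArg DFunLike.coe hg)

lemma adjoin_range_mk_X (I : Ideal (MvPolynomial σ R)) :
    Algebra.adjoin R (Set.range fun i => Ideal.Quotient.mk I (X i)) = ⊤ := by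
  have : (Set.range fun i => Ideal.Quotient.mk I (X i)) =
      Ideal.Quotient.mkₐ R I '' Set.range X := by
    rw [← Set.range_comp]; rfl
  rw [this, ← AlgHom.map_adjoin, adjoin_range_X, Algebra.map_top, AlgHom.range_eq_top]
  exact Ideal.Quotient.mkₐ_surjective R I

variable (R) in
abbrev NodeRing := MvPolynomial (Fin 2) R ⧸ Ideal.span {(X 0 : MvPolynomial (Fin 2) R) * X 1}

variable {A : Type*} [Semiring A] [Algebra R A]

lemma commute_pair_of_mul_eq_zero {a b : A} (hab : a * b = 0) (hba : b * a = 0) (i j : Fin 2) :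
    Commute (![a, b] i) (![a, b] j) := by
  fin_cases i <;> fin_cases j <;> simp [Commute, SemiconjBy, hab, hba]

variable (R) in
noncomputable def nodeLift (a b : A) (hab : a * b = 0) (hba : b * a = 0) : NodeRing R →ₐ[R] A :=
  Ideal.Quotient.liftₐ _ (aevalOfCommute ![a, b] (commute_pair_of_mul_eq_zero hab hba))
    fun p hp => by
      obtain ⟨q, rfl⟩ := Ideal.mem_span_singleton.mp hp
      simp [hab]

@[simp]
lemma nodeLift_mk_X_zero (a b : A) (hab : a * b = 0) (hba : b * a = 0) :
    nodeLift R a b hab hba (Ideal.Quotient.mk _ (X 0)) = a := by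
  change aevalOfCommute ![a, b] (commute_pair_of_mul_eq_zero hab hba) (X 0) = a
  simp

@[simp]
lemma nodeLift_mk_X_one (a b : A) (hab : a * b = 0) (hba : b * a = 0) :
    nodeLift R a b hab hba (Ideal.Quotient.mk _ (X 1)) = b := by
  change aevalOfCommute ![a, b] (commute_pair_of_mul_eq_zero hab hba) (X 1) = b
  simp

lemma nodeLift_single_injective [IsDomain R] {ι : Type*} [DecidableEq ι] {c₀ c₁ : ι}
    (hc : c₀ ≠ c₁) :
    Function.Injective (nodeLift R (Pi.single c₀ (X 0) : ι → MvPolynomial (Fin 2) R)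
      (Pi.single c₁ (X 1)) (single_mul_single_of_ne hc _ _)
      (single_mul_single_of_ne hc.symm _ _)) := by
  set π := nodeLift R (Pi.single c₀ (X 0) : ι → MvPolynomial (Fin 2) R) (Pi.single c₁ (X 1))
    (single_mul_single_of_ne hc _ _) (single_mul_single_of_ne hc.symm _ _)
  refine (injective_iff_map_eq_zero π).mpr fun q hq => ?_
  obtain ⟨p, rfl⟩ := Ideal.Quotient.mk_surjective q
  refine Ideal.Quotient.eq_zero_iff_mem.mpr (mem_span_X_mul_X_of_map_eq_zero hc
    (g := π.comp (Ideal.Quotient.mkₐ R _)) ?_ ?_ hq) <;> simp [π]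

end NodeRing

namespace A1k

variable {𝕜 k}

lemma mkAlgHom_ι_mul_ι_eq {g h : PGen} {c : FreeAlgebra 𝕜 PGen}
    (hr : PRel 𝕜 k (ι 𝕜 g * ι 𝕜 h) c) :
    RingQuot.mkAlgHom 𝕜 (PRel 𝕜 k) (ι 𝕜 g) * RingQuot.mkAlgHom 𝕜 (PRel 𝕜 k) (ι 𝕜 h) =
      RingQuot.mkAlgHom 𝕜 (PRel 𝕜 k) c := by
  rw [← map_mul]; exact RingQuot.mkAlgHom_rel 𝕜 hr

lemma eP_of_lt {i : ℕ} (h : k < i) : eP 𝕜 k i = 0 := by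
  simpa [eP] using RingQuot.mkAlgHom_rel 𝕜 (PRel.e_oob (𝕜 := 𝕜) i h)

lemma lP_of_le {i : ℕ} (h : k ≤ i) : lP 𝕜 k i = 0 := by
  simpa [lP] using RingQuot.mkAlgHom_rel 𝕜 (PRel.l_oob (𝕜 := 𝕜) i h)

lemma rP_of_le {i : ℕ} (h : k ≤ i) : rP 𝕜 k i = 0 := by
  simpa [rP] using RingQuot.mkAlgHom_rel 𝕜 (PRel.r_oob (𝕜 := 𝕜) i h)

@[simp]
lemma eP_mul_self (i : ℕ) : eP 𝕜 k i * eP 𝕜 k i = eP 𝕜 k i := by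
  rcases le_or_gt i k with h | h
  · exact mkAlgHom_ι_mul_ι_eq (PRel.e_idem i h)
  · simp [eP_of_lt h]

lemma eP_mul_eP_of_ne {i j : ℕ} (hij : i ≠ j) : eP 𝕜 k i * eP 𝕜 k j = 0 := by
  rcases le_or_gt i k with hi | hi
  · rcases le_or_gt j k with hj | hj
    · simpa [eP] using mkAlgHom_ι_mul_ι_eq (PRel.e_orth (𝕜 := 𝕜) i j hi hj hij)
    · simp [eP_of_lt hj]
  · simp [eP_of_lt hi]

lemma sum_eP : ∑ i ∈ Finset.range (k + 1), eP 𝕜 k i = 1 := by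
  simpa [eP, ← map_sum] using RingQuot.mkAlgHom_rel 𝕜 (PRel.e_sum (𝕜 := 𝕜) (k := k))

@[simp]
lemma lP_mul_eP (i : ℕ) : lP 𝕜 k i * eP 𝕜 k i = lP 𝕜 k i := by
  rcases lt_or_ge i k with h | h
  · exact mkAlgHom_ι_mul_ι_eq (PRel.l_src i h)
  · simp [lP_of_le h]

@[simp]
lemma eP_succ_mul_lP (i : ℕ) : eP 𝕜 k (i + 1) * lP 𝕜 k i = lP 𝕜 k i := by
  rcases lt_or_ge i k with h | h
  · exact mkAlgHom_ι_mul_ι_eq (PRel.l_tgt i h)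
  · simp [lP_of_le h]

@[simp]
lemma rP_mul_eP_succ (i : ℕ) : rP 𝕜 k i * eP 𝕜 k (i + 1) = rP 𝕜 k i := by
  rcases lt_or_ge i k with h | h
  · exact mkAlgHom_ι_mul_ι_eq (PRel.r_src i h)
  · simp [rP_of_le h]

@[simp]
lemma eP_mul_rP (i : ℕ) : eP 𝕜 k i * rP 𝕜 k i = rP 𝕜 k i := by
  rcases lt_or_ge i k with h | h
  · exact mkAlgHom_ι_mul_ι_eq (PRel.r_tgt i h)
  · simp [rP_of_le h]

lemma eP_mul_xP_mul_eP : eP 𝕜 k k * xP 𝕜 k * eP 𝕜 k k = xP 𝕜 k := by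
  simpa [eP, xP] using RingQuot.mkAlgHom_rel 𝕜 (PRel.x_vertex (𝕜 := 𝕜) (k := k))

@[simp]
lemma eP_mul_xP : eP 𝕜 k k * xP 𝕜 k = xP 𝕜 k := by
  rw [← eP_mul_xP_mul_eP, ← mul_assoc, ← mul_assoc, eP_mul_self]

@[simp]
lemma xP_mul_eP : xP 𝕜 k * eP 𝕜 k k = xP 𝕜 k := by
  rw [← eP_mul_xP_mul_eP, mul_assoc, eP_mul_self]

@[simp]
lemma lP_succ_mul_lP (i : ℕ) : lP 𝕜 k (i + 1) * lP 𝕜 k i = 0 := by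
  rcases lt_or_ge (i + 1) k with h | h
  · simpa [lP] using mkAlgHom_ι_mul_ι_eq (PRel.ll (𝕜 := 𝕜) i h)
  · simp [lP_of_le h]

@[simp]
lemma rP_mul_rP_succ (i : ℕ) : rP 𝕜 k i * rP 𝕜 k (i + 1) = 0 := by
  rcases lt_or_ge (i + 1) k with h | h
  · simpa [rP] using mkAlgHom_ι_mul_ι_eq (PRel.rr (𝕜 := 𝕜) i h)
  · simp [rP_of_le h]

lemma xP_mul_lP {i : ℕ} (h : i + 1 = k) : xP 𝕜 k * lP 𝕜 k i = 0 := by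
  subst h
  simpa [xP, lP] using mkAlgHom_ι_mul_ι_eq (PRel.xl (𝕜 := 𝕜) (k := i + 1) i.succ_pos)

lemma rP_mul_xP {i : ℕ} (h : i + 1 = k) : rP 𝕜 k i * xP 𝕜 k = 0 := by
  subst h
  simpa [xP, rP] using mkAlgHom_ι_mul_ι_eq (PRel.rx (𝕜 := 𝕜) (k := i + 1) i.succ_pos)

variable (𝕜 k) in
noncomputable def uP (i : ℕ) : PathAlg 𝕜 k := rP 𝕜 k i * lP 𝕜 k i

variable (𝕜 k) in
noncomputable def vP (i : ℕ) : PathAlg 𝕜 k := lP 𝕜 k i * rP 𝕜 k i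

@[simp]
lemma eP_mul_uP (i : ℕ) : eP 𝕜 k i * uP 𝕜 k i = uP 𝕜 k i := by simp [uP, ← mul_assoc]

@[simp]
lemma uP_mul_eP (i : ℕ) : uP 𝕜 k i * eP 𝕜 k i = uP 𝕜 k i := by simp [uP, mul_assoc]

@[simp]
lemma eP_succ_mul_vP (i : ℕ) : eP 𝕜 k (i + 1) * vP 𝕜 k i = vP 𝕜 k i := by simp [vP, ← mul_assoc]

@[simp]
lemma vP_mul_eP_succ (i : ℕ) : vP 𝕜 k i * eP 𝕜 k (i + 1) = vP 𝕜 k i := by simp [vP, mul_assoc]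

lemma xP_mul_vP {i : ℕ} (h : i + 1 = k) : xP 𝕜 k * vP 𝕜 k i = 0 := by
  simp [vP, ← mul_assoc, xP_mul_lP h]

lemma vP_mul_xP {i : ℕ} (h : i + 1 = k) : vP 𝕜 k i * xP 𝕜 k = 0 := by
  simp [vP, mul_assoc, rP_mul_xP h]

inductive NormalPath : Type
  | vertex (i : ℕ)
  | up (i n : ℕ)
  | down (i n : ℕ)
  | loopU (i n : ℕ)
  | loopV (i n : ℕ)
  | loopX (n : ℕ)

namespace NormalPath

variable (𝕜 k) in
@[simp]
noncomputable def eval : NormalPath → PathAlg 𝕜 k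
  | vertex i => eP 𝕜 k i
  | up i n => lP 𝕜 k i * uP 𝕜 k i ^ n
  | down i n => rP 𝕜 k i * vP 𝕜 k i ^ n
  | loopU i n => uP 𝕜 k i ^ (n + 1)
  | loopV i n => vP 𝕜 k i ^ (n + 1)
  | loopX n => xP 𝕜 k ^ (n + 1)

variable (k) in
@[simp]
def src : NormalPath → ℕ
  | vertex i | up i _ | loopU i _ => i
  | down i _ | loopV i _ => i + 1
  | loopX _ => k

variable (k) in
@[simp]
def tgt : NormalPath → ℕ
  | vertex i | down i _ | loopU i _ => i
  | up i _ | loopV i _ => i + 1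
  | loopX _ => k

lemma eP_tgt_mul_eval (p : NormalPath) : eP 𝕜 k (p.tgt k) * p.eval 𝕜 k = p.eval 𝕜 k := by
  cases p <;> simp [uP, vP, pow_succ', ← mul_assoc]

lemma eval_mul_eP_src (p : NormalPath) : p.eval 𝕜 k * eP 𝕜 k (p.src k) = p.eval 𝕜 k := by
  cases p with
  | vertex i => simp
  | up i n => cases n <;> simp [uP, pow_succ, mul_assoc]
  | down i n => cases n <;> simp [vP, pow_succ, mul_assoc]
  | loopU i n => simp [uP, pow_succ, mul_assoc]
  | loopV i n => simp [vP, pow_succ, mul_assoc]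
  | loopX n => simp [pow_succ, mul_assoc]

lemma eP_mul_eval (t : ℕ) (p : NormalPath) :
    eP 𝕜 k t * p.eval 𝕜 k = if p.tgt k = t then p.eval 𝕜 k else 0 := by
  split_ifs with h
  · rw [← h, eP_tgt_mul_eval]
  · rw [← eP_tgt_mul_eval, ← mul_assoc, eP_mul_eP_of_ne (Ne.symm h), zero_mul]

lemma eval_mul_eP (t : ℕ) (p : NormalPath) :
    p.eval 𝕜 k * eP 𝕜 k t = if p.src k = t then p.eval 𝕜 k else 0 := by
  split_ifs with h
  · rw [← h, eval_mul_eP_src]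
  · rw [← eval_mul_eP_src, mul_assoc, eP_mul_eP_of_ne h, mul_zero]

end NormalPath

variable (𝕜 k) in
abbrev pathSpan : Submodule 𝕜 (PathAlg 𝕜 k) := Submodule.span 𝕜 (Set.range (NormalPath.eval 𝕜 k))

lemma eval_mem_pathSpan (p : NormalPath) : p.eval 𝕜 k ∈ pathSpan 𝕜 k :=
  Submodule.subset_span ⟨p, rfl⟩

lemma mul_mem_pathSpan_of_forall {g : PathAlg 𝕜 k}
    (hg : ∀ p : NormalPath, g * p.eval 𝕜 k ∈ pathSpan 𝕜 k)
    {m : PathAlg 𝕜 k} (hm : m ∈ pathSpan 𝕜 k) : g * m ∈ pathSpan 𝕜 k :=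
  (Submodule.span_le (p := (pathSpan 𝕜 k).comap (LinearMap.mulLeft 𝕜 g)) |>.mpr
    (by rintro _ ⟨p, rfl⟩; exact hg p)) hm

lemma lP_mul_eval_mem_pathSpan (j : ℕ) (p : NormalPath) : lP 𝕜 k j * p.eval 𝕜 k ∈ pathSpan 𝕜 k := by
  rw [← lP_mul_eP, mul_assoc, NormalPath.eP_mul_eval]
  split_ifs with h
  · cases p with (simp only [NormalPath.tgt] at h; subst_vars)
    | vertex i => simpa using eval_mem_pathSpan (.up i 0)
    | up i n => simp [← mul_assoc]
    | down i n => simpa [← mul_assoc, vP, pow_succ'] using eval_mem_pathSpan (.loopV i n)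
    | loopU i n => simpa [← mul_assoc, pow_succ'] using eval_mem_pathSpan (.up i (n + 1))
    | loopV i n => simp [vP, pow_succ', ← mul_assoc]
    | loopX n => simp [lP_of_le le_rfl]
  · simp

lemma rP_mul_eval_mem_pathSpan (j : ℕ) (p : NormalPath) : rP 𝕜 k j * p.eval 𝕜 k ∈ pathSpan 𝕜 k := by
  rw [← rP_mul_eP_succ, mul_assoc, NormalPath.eP_mul_eval]
  split_ifs with h
  · cases p with (simp only [NormalPath.tgt, Nat.add_right_cancel_iff] at h; subst_vars)
    | vertex i => simpa using eval_mem_pathSpan (.down j 0)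
    | up i n => simpa [← mul_assoc, uP, pow_succ'] using eval_mem_pathSpan (.loopU i n)
    | down i n => simp [← mul_assoc]
    | loopU i n => simp [uP, pow_succ', ← mul_assoc]
    | loopV i n => simpa [← mul_assoc, pow_succ'] using eval_mem_pathSpan (.down i (n + 1))
    | loopX n => simp [pow_succ', ← mul_assoc, rP_mul_xP]
  · simp

lemma xP_mul_eval_mem_pathSpan (p : NormalPath) : xP 𝕜 k * p.eval 𝕜 k ∈ pathSpan 𝕜 k := by
  rw [← xP_mul_eP, mul_assoc, NormalPath.eP_mul_eval]
  split_ifs with h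
  · cases p with (simp only [NormalPath.tgt] at h; subst_vars)
    | vertex i => simpa using eval_mem_pathSpan (.loopX 0)
    | up i n => simp [← mul_assoc, xP_mul_lP]
    | down i n => simp [rP_of_le le_rfl]
    | loopU i n => simp [uP, rP_of_le le_rfl]
    | loopV i n => simp [vP, pow_succ', ← mul_assoc, xP_mul_lP]
    | loopX n => simpa [← pow_succ'] using eval_mem_pathSpan (.loopX (n + 1))
  · simp

lemma eP_mul_eval_mem_pathSpan (j : ℕ) (p : NormalPath) : eP 𝕜 k j * p.eval 𝕜 k ∈ pathSpan 𝕜 k := by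
  rw [NormalPath.eP_mul_eval]
  split_ifs
  · exact eval_mem_pathSpan p
  · exact zero_mem _

theorem pathSpan_eq_top : pathSpan 𝕜 k = ⊤ := by
  have hmul (a : FreeAlgebra 𝕜 PGen) {m : PathAlg 𝕜 k} (hm : m ∈ pathSpan 𝕜 k) :
      RingQuot.mkAlgHom 𝕜 (PRel 𝕜 k) a * m ∈ pathSpan 𝕜 k := by
    induction a using FreeAlgebra.induction generalizing m with
    | grade0 c => simpa [Algebra.algebraMap_eq_smul_one] using Submodule.smul_mem _ c hm
    | grade1 g =>
      refine mul_mem_pathSpan_of_forall (fun p => ?_) hm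
      cases g with
      | e j => exact eP_mul_eval_mem_pathSpan j p
      | l j => exact lP_mul_eval_mem_pathSpan j p
      | r j => exact rP_mul_eval_mem_pathSpan j p
      | x => exact xP_mul_eval_mem_pathSpan p
    | mul a b ha hb => simpa [mul_assoc] using ha (hb hm)
    | add a b ha hb => simpa [add_mul] using add_mem (ha hm) (hb hm)
  have hone : (1 : PathAlg 𝕜 k) ∈ pathSpan 𝕜 k := by
    rw [← sum_eP]
    exact sum_mem fun i _ => eval_mem_pathSpan (.vertex i)
  refine eq_top_iff.mpr fun a _ => ?_
  obtain ⟨a, rfl⟩ := RingQuot.mkAlgHom_surjective 𝕜 (PRel 𝕜 k) a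
  simpa using hmul a hone

lemma mem_span_loops {t : ℕ} {a : PathAlg 𝕜 k} (ha : eP 𝕜 k t * a * eP 𝕜 k t = a) :
    a ∈ Submodule.span 𝕜
      (NormalPath.eval 𝕜 k '' {p | p.src k = t ∧ p.tgt k = t}) := by
  let T : PathAlg 𝕜 k →ₗ[𝕜] PathAlg 𝕜 k :=
    LinearMap.mulLeft 𝕜 (eP 𝕜 k t) ∘ₗ LinearMap.mulRight 𝕜 (eP 𝕜 k t)
  have hT : a ∈ (pathSpan 𝕜 k).map T := by
    rw [pathSpan_eq_top]
    exact ⟨a, trivial, by simpa [T, mul_assoc] using ha⟩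
  rw [Submodule.map_span] at hT
  refine Submodule.span_le.mpr ?_ hT
  rintro _ ⟨_, ⟨p, rfl⟩, rfl⟩
  simp only [T, LinearMap.comp_apply, LinearMap.mulRight_apply, LinearMap.mulLeft_apply,
    NormalPath.eval_mul_eP, mul_ite, NormalPath.eP_mul_eval, mul_zero]
  split_ifs with h₁ h₂
  · exact Submodule.subset_span ⟨p, ⟨h₁, h₂⟩, rfl⟩
  all_goals exact zero_mem _

section MatUnit

variable {R : Type*} [Semiring R]

variable (k) in
def matUnit (i j : ℕ) (c : R) : Matrix (Fin (k + 1)) (Fin (k + 1)) R :=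
  if h : i ≤ k ∧ j ≤ k then Matrix.single ⟨i, by omega⟩ ⟨j, by omega⟩ c else 0

lemma matUnit_of_lt_left {i : ℕ} (j : ℕ) (h : k < i) (c : R) : matUnit k i j c = 0 := by
  rw [matUnit, dif_neg (by omega)]

lemma matUnit_of_lt_right (i : ℕ) {j : ℕ} (h : k < j) (c : R) : matUnit k i j c = 0 := by
  rw [matUnit, dif_neg (by omega)]

@[simp]
lemma matUnit_zero (i j : ℕ) : matUnit k i j (0 : R) = 0 := by
  unfold matUnit; split_ifs <;> simp

lemma matUnit_add (i j : ℕ) (a b : R) :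
    matUnit k i j (a + b) = matUnit k i j a + matUnit k i j b := by
  unfold matUnit; split_ifs <;> simp [Matrix.single_add]

lemma smul_matUnit {S : Type*} [SMulZeroClass S R] (c : S) (i j : ℕ) (a : R) :
    c • matUnit k i j a = matUnit k i j (c • a) := by
  unfold matUnit
  split_ifs
  · exact Matrix.smul_single ..
  · ext; simp

lemma matUnit_mul_matUnit {i j l : ℕ} (hj : j ≤ k) (a b : R) :
    matUnit k i j a * matUnit k j l b = matUnit k i l (a * b) := by
  unfold matUnit
  by_cases hi : i ≤ k <;> by_cases hl : l ≤ k <;> simp [hi, hl, hj]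

lemma matUnit_mul_matUnit_of_ne {i j j' l : ℕ} (h : j ≠ j') (a b : R) :
    matUnit k i j a * matUnit k j' l b = 0 := by
  unfold matUnit
  split_ifs <;> simp [Matrix.single_mul_single_of_ne, Fin.ext_iff, h]

lemma sum_matUnit : ∑ i ∈ Finset.range (k + 1), matUnit k i i (1 : R) = 1 := by
  rw [Finset.sum_range fun i => matUnit k i i (1 : R)]
  simp [matUnit, Nat.lt_succ_iff.mp (Fin.is_lt _), Matrix.sum_single_one]

lemma matUnit_injective {i j : ℕ} (hi : i ≤ k) (hj : j ≤ k) :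
    Function.Injective (matUnit k i j : R → _) := by
  intro a b hab
  simpa [matUnit, hi, hj] using congrFun (congrFun hab ⟨i, by omega⟩) ⟨j, by omega⟩

end MatUnit

lemma add_one_ne_self_zmod_two (c : ZMod 2) : c + 1 ≠ c := by
  revert c; decide

variable (𝕜 k) in
abbrev RepMat := Matrix (Fin (k + 1)) (Fin (k + 1)) (ZMod 2 → MvPolynomial (Fin 2) 𝕜)

variable (𝕜 k) in
/-- The generators act on `(k+1)`-tuples with entries in functions `ZMod 2 → 𝕜[X₀, X₁]`; the arrows
`ℓ_{i+1}`, `r_{i+1}` only touch the component of colour `i mod 2`, so two consecutive arrows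
compose to zero, while `x` lives in the colour opposite to that of `ℓ_k`. -/
noncomputable def repGen : PGen → RepMat 𝕜 k
  | .e i => matUnit k i i 1
  | .l i => matUnit k (i + 1) i (Pi.single (i : ZMod 2) (X 1))
  | .r i => matUnit k i (i + 1) (Pi.single (i : ZMod 2) 1)
  | .x => matUnit k k k (Pi.single (k : ZMod 2) (X 0))

lemma lift_repGen_rel ⦃a b : FreeAlgebra 𝕜 PGen⦄ (h : PRel 𝕜 k a b) :
    FreeAlgebra.lift 𝕜 (repGen 𝕜 k) a = FreeAlgebra.lift 𝕜 (repGen 𝕜 k) b := by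
  cases h with
  | e_idem i h => simp [repGen, matUnit_mul_matUnit h]
  | e_orth i j _ _ hij => simp [repGen, matUnit_mul_matUnit_of_ne hij]
  | e_sum => simp [repGen, sum_matUnit]
  | e_oob i h => simp [repGen, matUnit_of_lt_left i h]
  | l_src i h => simp [repGen, matUnit_mul_matUnit h.le]
  | l_tgt i h => simp [repGen, matUnit_mul_matUnit (Nat.succ_le_of_lt h)]
  | l_oob i h => simp [repGen, matUnit_of_lt_left i (Nat.lt_succ_of_le h)]
  | r_src i h => simp [repGen, matUnit_mul_matUnit (Nat.succ_le_of_lt h)]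
  | r_tgt i h => simp [repGen, matUnit_mul_matUnit h.le]
  | r_oob i h => simp [repGen, matUnit_of_lt_right i (Nat.lt_succ_of_le h)]
  | x_vertex => simp [repGen, matUnit_mul_matUnit le_rfl]
  | ll i h =>
    simp [repGen, matUnit_mul_matUnit h.le, single_mul_single_of_ne (add_one_ne_self_zmod_two _)]
  | rr i h =>
    simp [repGen, matUnit_mul_matUnit h.le,
      single_mul_single_of_ne (add_one_ne_self_zmod_two _).symm]
  | xl h =>
    obtain ⟨i, rfl⟩ : ∃ i, k = i + 1 := ⟨k - 1, by omega⟩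
    simp [repGen, matUnit_mul_matUnit le_rfl, single_mul_single_of_ne (add_one_ne_self_zmod_two _)]
  | rx h =>
    obtain ⟨i, rfl⟩ : ∃ i, k = i + 1 := ⟨k - 1, by omega⟩
    simp [repGen, matUnit_mul_matUnit le_rfl,
      single_mul_single_of_ne (add_one_ne_self_zmod_two _).symm]

variable (𝕜 k) in
noncomputable def rep : PathAlg 𝕜 k →ₐ[𝕜] RepMat 𝕜 k :=
  RingQuot.liftAlgHom 𝕜 ⟨FreeAlgebra.lift 𝕜 (repGen 𝕜 k), lift_repGen_rel⟩

@[simp]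
lemma rep_eP (i : ℕ) : rep 𝕜 k (eP 𝕜 k i) = matUnit k i i 1 := by
  simp [rep, eP, repGen]

@[simp]
lemma rep_lP (i : ℕ) : rep 𝕜 k (lP 𝕜 k i) = matUnit k (i + 1) i (Pi.single (i : ZMod 2) (X 1)) := by
  simp [rep, lP, repGen]

@[simp]
lemma rep_rP (i : ℕ) : rep 𝕜 k (rP 𝕜 k i) = matUnit k i (i + 1) (Pi.single (i : ZMod 2) 1) := by
  simp [rep, rP, repGen]

@[simp]
lemma rep_xP : rep 𝕜 k (xP 𝕜 k) = matUnit k k k (Pi.single (k : ZMod 2) (X 0)) := by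
  simp [rep, xP, repGen]

lemma eval_mem_range_cornerHom {B : Type*} [Semiring B] [Algebra 𝕜 B] {f : B →ₐ[𝕜] PathAlg 𝕜 k}
    {p : NormalPath} {b : B} (hb : f b = p.eval 𝕜 k) :
    p.eval 𝕜 k ∈ Set.range (cornerHom (eP 𝕜 k (p.tgt k)) f) :=
  ⟨b, by rw [cornerHom_apply, hb, NormalPath.eP_tgt_mul_eval]⟩

lemma rep_cornerHom {B : Type*} [Semiring B] [Algebra 𝕜 B] {t : ℕ} (ht : t ≤ k)
    {f : B →ₐ[𝕜] PathAlg 𝕜 k} (hc : ∀ b, Commute (eP 𝕜 k t) (f b))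
    (π : B →ₐ[𝕜] ZMod 2 → MvPolynomial (Fin 2) 𝕜) {s : Set B} (hs : Algebra.adjoin 𝕜 s = ⊤)
    (hgen : ∀ b ∈ s, rep 𝕜 k (f b) = matUnit k t t (π b)) (b : B) :
    rep 𝕜 k (cornerHom (eP 𝕜 k t) f b) = matUnit k t t (π b) := by
  have hb : b ∈ Algebra.adjoin 𝕜 s := hs ▸ trivial
  induction hb using Algebra.adjoin_induction with
  | mem b hb => rw [cornerHom_apply, map_mul, hgen b hb, rep_eP, matUnit_mul_matUnit ht, one_mul]
  | algebraMap c => simp [Algebra.algebraMap_eq_smul_one, smul_matUnit]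
  | add b₁ b₂ _ _ h₁ h₂ => rw [map_add, map_add, h₁, h₂, map_add, matUnit_add]
  | mul b₁ b₂ _ _ h₁ h₂ =>
    rw [cornerHom_mul (eP_mul_self t) hc, map_mul, h₁, h₂, matUnit_mul_matUnit ht, map_mul]

theorem cornerHom_spec {B : Type*} [Ring B] [Algebra 𝕜 B] {t : ℕ} (ht : t ≤ k)
    {f : B →ₐ[𝕜] PathAlg 𝕜 k} (π : B →ₐ[𝕜] ZMod 2 → MvPolynomial (Fin 2) 𝕜)
    (hπ : Function.Injective π) {s : Set B} (hs : Algebra.adjoin 𝕜 s = ⊤)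
    (hc : ∀ b ∈ s, Commute (eP 𝕜 k t) (f b))
    (hgen : ∀ b ∈ s, rep 𝕜 k (f b) = matUnit k t t (π b))
    (hloops : ∀ p : NormalPath, p.src k = t → p.tgt k = t →
      p.eval 𝕜 k ∈ Set.range (cornerHom (eP 𝕜 k t) f)) :
    Function.Injective (cornerHom (eP 𝕜 k t) f) ∧
      cornerHom (eP 𝕜 k t) f 1 = eP 𝕜 k t ∧
      (∀ p q, cornerHom (eP 𝕜 k t) f (p * q) =
        cornerHom (eP 𝕜 k t) f p * cornerHom (eP 𝕜 k t) f q) ∧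
      Set.range (cornerHom (eP 𝕜 k t) f) = {a | eP 𝕜 k t * a * eP 𝕜 k t = a} := by
  have hc' := commute_of_adjoin_eq_top hs hc
  refine ⟨?_, cornerHom_one, cornerHom_mul (eP_mul_self t) hc', ?_⟩
  · refine (injective_iff_map_eq_zero _).mpr fun b hb => hπ ?_
    have h := rep_cornerHom ht hc' π hs hgen b
    rw [hb, map_zero, ← matUnit_zero t t] at h
    rw [matUnit_injective ht ht h.symm, map_zero]
  · refine Set.Subset.antisymm ?_ fun a ha => ?_
    · rintro _ ⟨b, rfl⟩
      exact mul_cornerHom_mul (eP_mul_self t) hc' b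
    · refine (Submodule.span_le (p := LinearMap.range (cornerHom (eP 𝕜 k t) f))).mpr ?_
        (mem_span_loops ha)
      rintro _ ⟨p, ⟨hsrc, htgt⟩, rfl⟩
      exact hloops p hsrc htgt

theorem exists_nodeRing_iso_corner_last [IsDomain 𝕜] (hk : 1 ≤ k) :
    ∃ φ : NodeRing 𝕜 →ₗ[𝕜] PathAlg 𝕜 k,
      Function.Injective φ ∧
      φ 1 = eP 𝕜 k k ∧
      (∀ p q, φ (p * q) = φ p * φ q) ∧
      φ (Ideal.Quotient.mk _ (X 0)) = xP 𝕜 k ∧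
      φ (Ideal.Quotient.mk _ (X 1)) = lP 𝕜 k (k - 1) * rP 𝕜 k (k - 1) ∧
      Set.range φ = {a : PathAlg 𝕜 k | eP 𝕜 k k * a * eP 𝕜 k k = a} := by
  obtain ⟨i, rfl⟩ : ∃ i, k = i + 1 := ⟨k - 1, by omega⟩
  let f := nodeLift 𝕜 (xP 𝕜 (i + 1)) (vP 𝕜 (i + 1) i) (xP_mul_vP rfl) (vP_mul_xP rfl)
  have hc : ((i + 1 : ℕ) : ZMod 2) ≠ (i : ZMod 2) := by
    push_cast; exact add_one_ne_self_zmod_two _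
  obtain ⟨hinj, hone, hmul, hrange⟩ := cornerHom_spec (f := f) le_rfl _
    (nodeLift_single_injective hc) (adjoin_range_mk_X _)
    (by rintro _ ⟨j, rfl⟩; fin_cases j <;> simp [f, Commute, SemiconjBy])
    (by rintro _ ⟨j, rfl⟩; fin_cases j <;> simp [f, vP, matUnit_mul_matUnit, ← Pi.single_mul])
    (fun p hsrc htgt => by
      cases p with (simp only [NormalPath.src, NormalPath.tgt] at hsrc htgt)
      | vertex j => subst hsrc; exact ⟨1, cornerHom_one⟩
      | up j n | down j n => omega
      | loopU j n => subst hsrc; exact ⟨0, by simp [uP, rP_of_le]⟩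
      | loopV j n =>
        obtain rfl : i = j := by omega
        exact eval_mem_range_cornerHom (p := .loopV i n) (b := Ideal.Quotient.mk _ (X 1) ^ (n + 1))
          (by simp [f])
      | loopX n =>
        exact eval_mem_range_cornerHom (p := .loopX n) (b := Ideal.Quotient.mk _ (X 0) ^ (n + 1))
          (by simp [f]))
  exact ⟨_, hinj, hone, hmul, by simp [f], by simp [f, vP, ← mul_assoc], hrange⟩

theorem exists_polynomial_iso_corner_zero [IsDomain 𝕜] (hk : 1 ≤ k) :
    ∃ ψ : Polynomial 𝕜 →ₗ[𝕜] PathAlg 𝕜 k,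
      Function.Injective ψ ∧
      ψ 1 = eP 𝕜 k 0 ∧
      (∀ p q, ψ (p * q) = ψ p * ψ q) ∧
      ψ Polynomial.X = rP 𝕜 k 0 * lP 𝕜 k 0 ∧
      Set.range ψ = {a : PathAlg 𝕜 k | eP 𝕜 k 0 * a * eP 𝕜 k 0 = a} := by
  obtain ⟨hinj, hone, hmul, hrange⟩ := cornerHom_spec (f := Polynomial.aeval (uP 𝕜 k 0))
    (Nat.zero_le k) _ (aeval_single_X_injective (0 : ZMod 2) 1) Polynomial.adjoin_X
    (by simp [Commute, SemiconjBy])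
    (by simp [uP, matUnit_mul_matUnit hk, ← Pi.single_mul])
    (fun p hsrc htgt => by
      cases p with (simp only [NormalPath.src, NormalPath.tgt] at hsrc htgt)
      | vertex j => subst hsrc; exact ⟨1, cornerHom_one⟩
      | up j n | down j n | loopV j n => omega
      | loopU j n =>
        subst hsrc
        exact eval_mem_range_cornerHom (p := .loopU 0 n) (b := Polynomial.X ^ (n + 1)) (by simp)
      | loopX n => omega)
  exact ⟨_, hinj, hone, hmul, by simp [uP, ← mul_assoc], hrange⟩

end A1k

theorem stmt_12 (𝕜 : Type) [Field 𝕜] (k : ℕ) (hk : 1 ≤ k) :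
    (∃ φ : (MvPolynomial (Fin 2) 𝕜 ⧸
        Ideal.span {(X 0 : MvPolynomial (Fin 2) 𝕜) * X 1}) →ₗ[𝕜] PathAlg 𝕜 k,
      Function.Injective φ ∧
      φ 1 = eP 𝕜 k k ∧
      (∀ p q, φ (p * q) = φ p * φ q) ∧
      φ (Ideal.Quotient.mk _ (X 0)) = xP 𝕜 k ∧
      φ (Ideal.Quotient.mk _ (X 1)) = lP 𝕜 k (k - 1) * rP 𝕜 k (k - 1) ∧
      Set.range φ = {a : PathAlg 𝕜 k | eP 𝕜 k k * a * eP 𝕜 k k = a}) ∧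
    (∃ ψ : Polynomial 𝕜 →ₗ[𝕜] PathAlg 𝕜 k,
      Function.Injective ψ ∧
      ψ 1 = eP 𝕜 k 0 ∧
      (∀ p q, ψ (p * q) = ψ p * ψ q) ∧
      ψ Polynomial.X = rP 𝕜 k 0 * lP 𝕜 k 0 ∧
      Set.range ψ = {a : PathAlg 𝕜 k | eP 𝕜 k 0 * a * eP 𝕜 k 0 = a}) :=
  ⟨A1k.exists_nodeRing_iso_corner_last hk, A1k.exists_polynomial_iso_corner_zero hk⟩
end
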